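/- arXiv:2003.00366 — 4 statements merged into one kernel-verified Lean document; each statement's English description precedes it below -/
import Mathlib

section
/- If d ≡ 2 (mod 6), then the rank-2 lattice with Gram matrix rows (3,1),(1,(d+1)/3) has cyclic discriminant group of order d. -/
/-!
The Gram matrix `!![a, 1; 1, k]` has determinant `a * k - 1 = n`, and the functional
`v ↦ v 0 - a * v 1` into `ZMod n` is surjective with kernel exactly its column span: it kills
both columns, and conversely `v = (v 1 + k * m) • (a, 1) - m • (1, k)` whenever
`v 0 - a * v 1 = n * m`. With `a = 3` and `k = (d + 1) / 3` this gives `n = d`.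
-/

namespace Matrix

variable (n : ℕ) (a : ℤ)

def gramCokernelMap : (Fin 2 → ℤ) →ₗ[ℤ] ZMod n where
  toFun v := (v 0 : ZMod n) - a * (v 1 : ZMod n)
  map_add' u v := by simp only [Pi.add_apply]; push_cast; ring
  map_smul' c v := by
    simp only [Pi.smul_apply, smul_eq_mul, RingHom.id_apply, zsmul_eq_mul]
    push_cast; ring

theorem gramCokernelMap_surjective : Function.Surjective (gramCokernelMap n a) := by
  intro z
  obtain ⟨m, rfl⟩ := ZMod.intCast_surjective z
  exact ⟨![m, 0], by simp [gramCokernelMap]⟩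

variable {n a}

theorem range_toLin'_eq_ker_gramCokernelMap {k : ℤ} (h : a * k = n + 1) :
    LinearMap.range (toLin' !![a, 1; 1, k]) = LinearMap.ker (gramCokernelMap n a) := by
  ext v
  constructor
  · rintro ⟨x, rfl⟩
    have hak : (a : ZMod n) * k = 1 := by
      simpa using congrArg (Int.cast : ℤ → ZMod n) h
    simp only [LinearMap.mem_ker, gramCokernelMap, LinearMap.coe_mk, AddHom.coe_mk,
      toLin'_apply, mulVec, dotProduct, Fin.sum_univ_two, of_apply, cons_val', cons_val_zero,
      cons_val_fin_one, cons_val_one, one_mul, Int.cast_add, Int.cast_mul]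
    linear_combination (-(x 1 : ZMod n)) * hak
  · intro hv
    have hdvd : (n : ℤ) ∣ v 0 - a * v 1 := by
      rw [← ZMod.intCast_zmod_eq_zero_iff_dvd]
      simpa [gramCokernelMap] using LinearMap.mem_ker.mp hv
    obtain ⟨m, hm⟩ := hdvd
    refine ⟨![v 1 + k * m, -m], funext fun i => ?_⟩
    fin_cases i
    · simp only [Fin.zero_eta, toLin'_apply, mulVec, dotProduct, of_apply, cons_val',
        cons_val_fin_one, cons_val_zero, Fin.sum_univ_two, cons_val_one, mul_neg, one_mul]
      linear_combination m * h - hm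
    · simp [toLin'_apply, mulVec, dotProduct, Fin.sum_univ_two]

noncomputable def gramCokernelEquivZMod {k : ℤ} (h : a * k = n + 1) :
    ((Fin 2 → ℤ) ⧸ LinearMap.range (toLin' !![a, 1; 1, k])) ≃+ ZMod n :=
  ((Submodule.quotEquivOfEq _ _ (range_toLin'_eq_ker_gramCokernelMap h)).trans
    ((gramCokernelMap n a).quotKerEquivOfSurjective (gramCokernelMap_surjective n a))).toAddEquiv

end Matrix

theorem three_mul_succ_div_three {d : ℕ} (h : d % 3 = 2) :
    3 * (((d : ℤ) + 1) / 3) = d + 1 :=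
  Int.mul_ediv_cancel' (by omega)

theorem stmt_3_general (d : ℕ) (hmod : d % 6 = 2) :
    Nonempty
      (((Fin 2 → ℤ) ⧸
          LinearMap.range (Matrix.toLin'
            (!![3, 1; 1, ((d : ℤ) + 1) / 3] : Matrix (Fin 2) (Fin 2) ℤ)))
        ≃+ ZMod d) :=
  ⟨Matrix.gramCokernelEquivZMod (three_mul_succ_div_three (by omega))⟩

/-- If `d ≡ 2 (mod 6)`, the rank-2 lattice with Gram matrix `!![3,1;1,(d+1)/3]`
has discriminant group (the cokernel of the Gram matrix on `ℤ²`) cyclic of order `d`. -/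
theorem stmt_3 (d : ℕ) (hd : 0 < d) (hmod : d % 6 = 2) :
    Nonempty
      (((Fin 2 → ℤ) ⧸
          LinearMap.range (Matrix.toLin'
            (!![3, 1; 1, ((d : ℤ) + 1) / 3] : Matrix (Fin 2) (Fin 2) ℤ)))
        ≃+ ZMod d) :=
  stmt_3_general d hmod
end

section
/- There are no integers b, c such that 2 = 20b² − 98bc + 146c². -/
/-
Completing the square, 4a(ax² + bxy + cy²) = (2ax + by)² + (4ac - b²)y². For the form
20b² - 98bc + 146c² representing 2 this reads 160 = (40b - 98c)² + 2076c², forcing c = 0,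
and then 20b² = 2 has no integer solution.
-/

theorem snd_eq_zero_of_mul_lt_discr {a b c n x y : ℤ} (ha : 0 < a) (hn : 0 ≤ n)
    (hlt : 4 * a * n < 4 * a * c - b ^ 2) (h : n = a * x ^ 2 + b * x * y + c * y ^ 2) :
    y = 0 := by
  have hsq : 4 * a * n = (2 * a * x + b * y) ^ 2 + (4 * a * c - b ^ 2) * y ^ 2 := by
    rw [h]; ring
  by_contra hy
  have hy2 : 1 ≤ y ^ 2 := (one_le_sq_iff_one_le_abs y).mpr (Int.one_le_abs hy)
  nlinarith [sq_nonneg (2 * a * x + b * y), mul_nonneg ha.le hn]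

theorem stmt_5 : ¬ ∃ b c : ℤ, 2 = 20 * b ^ 2 - 98 * b * c + 146 * c ^ 2 := by
  rintro ⟨b, c, h⟩
  obtain rfl : c = 0 :=
    snd_eq_zero_of_mul_lt_discr (a := 20) (b := -98) (c := 146) (n := 2) (x := b)
      (by norm_num) (by norm_num) (by norm_num) (by linarith)
  omega
end

section
/- No element of {2, 6, 8, 14, 18, 26, 38, 42} is represented by the binary quadratic form 20b² − 98bc + 146c² with b, c ∈ ℤ. -/
/-!
Completing the square gives `20 · Q(b, c) = (20b − 49c)² + 519c²`. A value below `104` therefore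
forces `|c| ≤ 1`; for `c = 0` the value is a multiple of `20`, and for `c = ±1` the only values
below `68` are `30` and `32`. None of the listed numbers is of either kind.
-/

def Q (b c : ℤ) : ℤ := 20 * b ^ 2 - 98 * b * c + 146 * c ^ 2

lemma Q_neg_neg (b c : ℤ) : Q (-b) (-c) = Q b c := by
  unfold Q; ring

lemma twenty_mul_Q (b c : ℤ) : 20 * Q b c = (20 * b - 49 * c) ^ 2 + 519 * c ^ 2 := by
  unfold Q; ring

lemma abs_le_one_of_Q_lt {b c : ℤ} (h : Q b c < 104) : |c| ≤ 1 := by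
  by_contra! hc
  have hc2 : 2 ^ 2 ≤ c ^ 2 := sq_le_sq.mpr (by rw [abs_two]; exact hc)
  nlinarith [twenty_mul_Q b c, sq_nonneg (20 * b - 49 * c)]

lemma twenty_dvd_Q_zero (b : ℤ) : 20 ∣ Q b 0 :=
  ⟨b ^ 2, by unfold Q; ring⟩

lemma Q_one_eq_of_lt {b : ℤ} (h : Q b 1 < 68) : Q b 1 = 30 ∨ Q b 1 = 32 := by
  have hsq : (20 * b - 49) ^ 2 < 29 ^ 2 := by nlinarith [twenty_mul_Q b 1]
  obtain ⟨hlo, hhi⟩ := abs_lt.mp (abs_lt_of_sq_lt_sq hsq (by norm_num))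
  obtain rfl | rfl : b = 2 ∨ b = 3 := by omega
  all_goals simp [Q]

lemma twenty_dvd_Q_or_eq_of_lt {b c : ℤ} (h : Q b c < 68) :
    20 ∣ Q b c ∨ Q b c = 30 ∨ Q b c = 32 := by
  obtain rfl | rfl | rfl : c = -1 ∨ c = 0 ∨ c = 1 := by
    have := abs_le.mp (abs_le_one_of_Q_lt (h.trans (by norm_num))); omega
  · rw [← Q_neg_neg, neg_neg] at h ⊢
    exact .inr (Q_one_eq_of_lt h)
  · exact .inl (twenty_dvd_Q_zero b)
  · exact .inr (Q_one_eq_of_lt h)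

theorem stmt_6 :
    ∀ n ∈ ({2, 6, 8, 14, 18, 26, 38, 42} : Finset ℤ),
      ¬ ∃ b c : ℤ, n = 20 * b ^ 2 - 98 * b * c + 146 * c ^ 2 := by
  rintro n hn ⟨b, c, hbc⟩
  have hQ : Q b c = n := hbc.symm
  fin_cases hn <;>
    rcases twenty_dvd_Q_or_eq_of_lt (hQ.trans_lt (by norm_num)) with h | h | h <;> omega
end

section
/- Let n₁, n₂ be integers with 1 ≤ n₁ < n₂ and let τ be an integer with |τ| < 2√(n₁n₂ − n₁). Then the quadratic form Q(a,b,c) = 3a² + (2n₁+1)b² + (2n₂+1)c² + 2ab + 2ac + 2τbc takes value 2 for no integers a, b, c. -/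
/-!
Completing the square in `a` gives
`3 Q(a,b,c) = (3a + b + c)² + F(b,c)` with
`F(b,c) = (6n₁+2) b² + (6τ-2) bc + (6n₂+2) c²`.
The bound on `τ` makes the discriminant of `F` so negative that `F(b,c) > 6` whenever
`(b,c) ≠ 0`, so `Q = 2` forces `b = c = 0`, and then `3a² = 2` has no integer solution.
-/

lemma Real.sq_lt_of_abs_lt_two_mul_sqrt {x m : ℝ} (h : |x| < 2 * √m) : x ^ 2 < 4 * m := by
  have hm : 0 < m := Real.sqrt_pos.mp (by linarith [abs_nonneg x])
  calc x ^ 2 = |x| ^ 2 := (sq_abs x).symm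
    _ < (2 * √m) ^ 2 := pow_lt_pow_left₀ h (abs_nonneg x) two_ne_zero
    _ = 4 * m := by rw [mul_pow, Real.sq_sqrt hm.le]; norm_num

lemma Int.sq_lt_of_abs_lt_two_mul_sqrt {t m : ℤ} (h : |(t : ℝ)| < 2 * √(m : ℝ)) :
    t ^ 2 < 4 * m := by
  exact_mod_cast Real.sq_lt_of_abs_lt_two_mul_sqrt h

lemma Int.lt_binaryForm_of_discr {A B C k x y : ℤ} (hk : 0 ≤ k) (hA : k < A)
    (hdisc : 4 * A * k < 4 * A * C - B ^ 2) (hxy : x ≠ 0 ∨ y ≠ 0) :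
    k < A * x ^ 2 + B * x * y + C * y ^ 2 := by
  rcases eq_or_ne y 0 with rfl | hy
  · have hx : 0 < x ^ 2 := sq_pos_of_ne_zero (hxy.resolve_right (not_not.mpr rfl))
    nlinarith
  · have hy2 : 1 ≤ y ^ 2 := by have := sq_pos_of_ne_zero hy; omega
    have completed_square : 4 * A * (A * x ^ 2 + B * x * y + C * y ^ 2)
        = (2 * A * x + B * y) ^ 2 + (4 * A * C - B ^ 2) * y ^ 2 := by ring
    have hdisc_le : 4 * A * C - B ^ 2 ≤ (4 * A * C - B ^ 2) * y ^ 2 :=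
      le_mul_of_one_le_right (by nlinarith) hy2
    have h4A : 4 * A * k < 4 * A * (A * x ^ 2 + B * x * y + C * y ^ 2) := by
      linarith [sq_nonneg (2 * A * x + B * y)]
    exact lt_of_mul_lt_mul_left h4A (by omega)

theorem stmt_8_general (n₁ n₂ τ : ℤ) (h1 : 1 ≤ n₁)
    (hτ : |(τ : ℝ)| < 2 * Real.sqrt ((n₁ * n₂ - n₁ : ℤ) : ℝ)) :
    ∀ a b c : ℤ,
      3 * a ^ 2 + (2 * n₁ + 1) * b ^ 2 + (2 * n₂ + 1) * c ^ 2
        + 2 * a * b + 2 * a * c + 2 * τ * b * c ≠ 2 := by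
  have hτ_sq : τ ^ 2 < 4 * (n₁ * n₂ - n₁) := Int.sq_lt_of_abs_lt_two_mul_sqrt hτ
  have hτ_lower : -(n₁ + n₂) < τ :=
    (abs_lt_of_sq_lt_sq' (by nlinarith [sq_nonneg (n₁ - n₂)]) (by nlinarith)).1
  have hdisc : 4 * (6 * n₁ + 2) * 6 < 4 * (6 * n₁ + 2) * (6 * n₂ + 2) - (6 * τ - 2) ^ 2 := by
    nlinarith
  intro a b c hQ
  have hsquare : 3 * 2 = (3 * a + b + c) ^ 2
      + ((6 * n₁ + 2) * b ^ 2 + (6 * τ - 2) * b * c + (6 * n₂ + 2) * c ^ 2) := by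
    linear_combination (-3) * hQ
  by_cases hbc : b ≠ 0 ∨ c ≠ 0
  · have := Int.lt_binaryForm_of_discr (by norm_num) (by omega) hdisc hbc
    linarith [sq_nonneg (3 * a + b + c)]
  · obtain ⟨rfl, rfl⟩ : b = 0 ∧ c = 0 := by tauto
    simp only [ne_eq, OfNat.ofNat_ne_zero, not_false_eq_true, zero_pow, mul_zero, add_zero] at hQ
    omega

theorem stmt_8 (n₁ n₂ τ : ℤ) (h1 : 1 ≤ n₁) (h12 : n₁ < n₂)
    (hτ : |(τ : ℝ)| < 2 * Real.sqrt ((n₁ * n₂ - n₁ : ℤ) : ℝ)) :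
    ∀ a b c : ℤ,
      3 * a ^ 2 + (2 * n₁ + 1) * b ^ 2 + (2 * n₂ + 1) * c ^ 2
        + 2 * a * b + 2 * a * c + 2 * τ * b * c ≠ 2 :=
  stmt_8_general n₁ n₂ τ h1 hτ
end
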